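/- Let x be a sequence of real numbers. Then the set of ω ∈ (0,1] such that the statistical cluster points of the subsequence x↾ω equal the statistical cluster points of x is comeager if and only if it is nonmeager, if and only if every ordinary limit point of x is a statistical cluster point of x. -/

import Mathlib

open Filter Topology Set MeasureTheory
open scoped ENNReal

noncomputable section

/-- An ideal on ℕ: contains all finite sets, closed under subsets and finite
unions, and does not contain ℕ itself. -/
def IsIdealOn (I : Set (Set ℕ)) : Prop :=
  (∀ ⦃A B : Set ℕ⦄, A ⊆ B → B ∈ I → A ∈ I) ∧
  (∀ ⦃A B : Set ℕ⦄, A ∈ I → B ∈ I → A ∪ B ∈ I) ∧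
  (∀ A : Set ℕ, A.Finite → A ∈ I) ∧
  (Set.univ : Set ℕ) ∉ I

/-- `l` is an `I`-cluster point of the sequence `x`. -/
def IdealClusterPt {X : Type*} [TopologicalSpace X] (I : Set (Set ℕ)) (x : ℕ → X) (l : X) : Prop :=
  ∀ U ∈ 𝓝 l, {n | x n ∈ U} ∉ I

/-- `l` is an `I`-limit point of the sequence `x`. -/
def IdealLimitPt {X : Type*} [TopologicalSpace X] (I : Set (Set ℕ)) (x : ℕ → X) (l : X) : Prop :=
  ∃ k : ℕ → ℕ, StrictMono k ∧ Tendsto (x ∘ k) atTop (𝓝 l) ∧ Set.range k ∉ I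

/-- Ordinary limit points of a sequence. -/
def limitPts {X : Type*} [TopologicalSpace X] (x : ℕ → X) : Set X :=
  {l | ∃ k : ℕ → ℕ, StrictMono k ∧ Tendsto (x ∘ k) atTop (𝓝 l)}

/-- The `i`-th digit (0-indexed; representing `d_{i+1}`) of the non-terminating
dyadic expansion of `ω ∈ (0,1]`. -/
def dyadicDigit (ω : ℝ) (i : ℕ) : ℤ :=
  ⌈(2:ℝ) ^ (i + 1) * ω⌉ - 2 * ⌈(2:ℝ) ^ i * ω⌉ + 1

/-- The subsequence `x↾ω` of `x` keeping `x i` iff the dyadic digit of `ω` at `i` is `1`. -/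
def subseq {X : Type*} (x : ℕ → X) (ω : ℝ) : ℕ → X :=
  fun k => x (Nat.nth (fun i => dyadicDigit ω i = 1) k)

open Classical in
/-- Characteristic-function embedding of `P(ℕ)` into Cantor space. -/
def chi (A : Set ℕ) : ℕ → Bool := fun n => if n ∈ A then true else false

def IsFsigma {α : Type*} [TopologicalSpace α] (s : Set α) : Prop :=
  ∃ F : ℕ → Set α, (∀ n, IsClosed (F n)) ∧ s = ⋃ n, F n

def IsFsigmaDelta {α : Type*} [TopologicalSpace α] (s : Set α) : Prop :=
  ∃ F : ℕ → Set α, (∀ n, IsFsigma (F n)) ∧ s = ⋂ n, F n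

/-- `I` is `F_σ`-separated from its dual filter. -/
def FsigmaSeparated (I : Set (Set ℕ)) : Prop :=
  ∃ A : Set (ℕ → Bool), IsFsigma A ∧ chi '' I ⊆ A ∧ A ∩ chi '' {S : Set ℕ | Sᶜ ∈ I} = ∅

/-- A submeasure on ℕ. -/
def IsSubmeasureOn (φ : Set ℕ → ℝ≥0∞) : Prop :=
  φ ∅ = 0 ∧ (∀ ⦃A B : Set ℕ⦄, A ⊆ B → φ A ≤ φ B) ∧
    (∀ A B : Set ℕ, φ (A ∪ B) ≤ φ A + φ B) ∧ ∀ n : ℕ, φ {n} ≠ ⊤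

/-- A partition of ℕ into nonempty finite sets. -/
def IsFinPartition (P : ℕ → Set ℕ) : Prop :=
  (∀ n, (P n).Finite ∧ (P n).Nonempty) ∧ (⋃ n, P n) = Set.univ ∧
    Pairwise (Function.onFun Disjoint P)

/-- The generalized density ideal determined by `(P n)` and `(μ n)`. -/
def Zmu (P : ℕ → Set ℕ) (μ : ℕ → Set ℕ → ℝ≥0∞) : Set (Set ℕ) :=
  {A | Tendsto (fun n => μ n (A ∩ P n)) atTop (𝓝 0)}

def IsGenDensityIdeal (I : Set (Set ℕ)) : Prop :=
  ∃ (P : ℕ → Set ℕ) (μ : ℕ → Set ℕ → ℝ≥0∞), IsFinPartition P ∧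
    (∀ n, IsSubmeasureOn (μ n)) ∧ (∀ n A, μ n A = μ n (A ∩ P n)) ∧
    Filter.limsup (fun n => μ n (P n)) atTop ≠ 0 ∧ I = Zmu P μ

/-- Exhaustive ideal of a submeasure. -/
def Exh (φ : Set ℕ → ℝ≥0∞) : Set (Set ℕ) :=
  {A | Tendsto (fun n => φ (A \ Set.Iio n)) atTop (𝓝 0)}

open Classical in
/-- The ideal `I_α`. -/
def Ialpha (α : ℝ) : Set (Set ℕ) :=
  {A | (fun n => ∑ i ∈ Finset.Icc 1 n, if i ∈ A then (i:ℝ) ^ α else 0)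
      =o[atTop] (fun n => ∑ i ∈ Finset.Icc 1 n, (i:ℝ) ^ α)}

open Classical in
/-- The ideal of natural density zero sets. -/
def densityZero : Set (Set ℕ) :=
  {A | Tendsto (fun n : ℕ => (∑ i ∈ Finset.range n, if i ∈ A then (1:ℝ) else 0) / n)
      atTop (𝓝 0)}

open Classical in
def phiEU (f : ℕ → ℝ) (A : Set ℕ) : ℝ :=
  ⨆ n : ℕ, (∑ i ∈ Finset.Icc 1 n, if i ∈ A then f i else 0) / (∑ i ∈ Finset.Icc 1 n, f i)

def ExhReal (φ : Set ℕ → ℝ) : Set (Set ℕ) :=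
  {A | Tendsto (fun n => φ (A \ Set.Iio n)) atTop (𝓝 0)}

def IsErdosUlamIdeal (I : Set (Set ℕ)) : Prop :=
  ∃ f : ℕ → ℝ, (∀ n, 0 < f n) ∧
    Tendsto (fun n => ∑ i ∈ Finset.Icc 1 n, f i) atTop atTop ∧
    (fun n => f n) =o[atTop] (fun n => ∑ i ∈ Finset.Icc 1 n, f i) ∧
    I = ExhReal (phiEU f)

end

/-!
Write `D_ω = {i | d_i(ω) = 1}`, so that `x↾ω = x ∘ nth D_ω`. Statistical cluster points of a
subsequence are limit points of `x`. Conversely, let `V` be open with `x_i ∈ V` for infinitely many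
`i`. Any finite dyadic prefix can be extended by digits `1` exactly at the following indices `i`
with `x_i ∈ V`, until these make up at least half of all digits `1` so far; then every `ω` with
the extended prefix sees `{j | (x↾ω)_j ∈ V}` with relative density `≥ 1/2` at that stage. Prefixes
correspond to open dyadic intervals, so this happens at arbitrarily late stages for a dense `G_δ`
of `ω`; intersecting over a countable basis, for comeager many `ω` the statistical cluster points
of `x↾ω` are exactly the limit points of `x`. As `(0,1]` is a Baire space, comeager sets are
nonmeagre, and the equivalences follow.
-/

open scoped Finset

section DensityZero

open scoped Classical

lemma mem_densityZero_iff {A : Set ℕ} :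
    A ∈ densityZero ↔
      Tendsto (fun n : ℕ => (#{i ∈ Finset.range n | i ∈ A} : ℝ) / n) atTop (𝓝 0) := by
  simp only [densityZero, mem_ofPred_eq, Finset.natCast_card_filter]

lemma mem_densityZero_of_subset {A B : Set ℕ} (hAB : A ⊆ B) (hB : B ∈ densityZero) :
    A ∈ densityZero := by
  rw [mem_densityZero_iff] at hB ⊢
  refine squeeze_zero (fun n => by positivity) (fun n => ?_) hB
  gcongr

lemma Set.Finite.mem_densityZero {A : Set ℕ} (hA : A.Finite) : A ∈ densityZero := by
  rw [mem_densityZero_iff]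
  refine squeeze_zero (fun n => by positivity) (fun n => ?_)
    (tendsto_const_div_atTop_nhds_zero_nat (#hA.toFinset : ℝ))
  gcongr
  intro i hi
  simpa using (Finset.mem_filter.1 hi).2

lemma notMem_densityZero_of_frequently {A : Set ℕ}
    (h : ∃ᶠ n in atTop, n ≤ 2 * #{i ∈ Finset.range n | i ∈ A}) : A ∉ densityZero := by
  intro hA
  rw [mem_densityZero_iff] at hA
  obtain ⟨n, ⟨hn, hsmall⟩, hpos⟩ :=
    ((h.and_eventually (hA.eventually (gt_mem_nhds one_half_pos))).and_eventually
      (eventually_gt_atTop 0)).exists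
  have hn' : (n : ℝ) ≤ 2 * #{i ∈ Finset.range n | i ∈ A} := by exact_mod_cast hn
  rw [div_lt_iff₀ (by exact_mod_cast hpos)] at hsmall
  linarith

end DensityZero

section ClusterPoints

variable {X : Type*} [TopologicalSpace X]

lemma IdealClusterPt.mapClusterPt {I : Set (Set ℕ)} (hI : ∀ A : Set ℕ, A.Finite → A ∈ I)
    {x : ℕ → X} {l : X} (h : IdealClusterPt I x l) : MapClusterPt l atTop x :=
  mapClusterPt_iff_frequently.2 fun U hU =>
    Nat.frequently_atTop_iff_infinite.2 fun hfin => h U hU (hI _ hfin)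

lemma mem_limitPts_iff_mapClusterPt [FirstCountableTopology X] {x : ℕ → X} {l : X} :
    l ∈ limitPts x ↔ MapClusterPt l atTop x :=
  ⟨fun ⟨_, hk, hl⟩ => hl.mapClusterPt.of_comp hk.tendsto_atTop,
    MapClusterPt.tendsto_subseq⟩

lemma limitPts_comp_subset {x : ℕ → X} {k : ℕ → ℕ} (hk : StrictMono k) :
    limitPts (x ∘ k) ⊆ limitPts x :=
  fun _ ⟨φ, hφ, hl⟩ => ⟨k ∘ φ, hk.comp hφ, hl⟩

end ClusterPoints

section DyadicDigits

lemma dyadicDigit_eq_zero_or_one (ω : ℝ) (i : ℕ) : dyadicDigit ω i = 0 ∨ dyadicDigit ω i = 1 := by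
  have h2 : (2 : ℝ) ^ (i + 1) * ω = 2 * (2 ^ i * ω) := by ring
  have hle : ⌈(2 : ℝ) ^ (i + 1) * ω⌉ ≤ 2 * ⌈(2 : ℝ) ^ i * ω⌉ := by
    rw [Int.ceil_le, h2]
    push_cast
    linarith [Int.le_ceil ((2 : ℝ) ^ i * ω)]
  have hgt : 2 * ⌈(2 : ℝ) ^ i * ω⌉ - 2 < ⌈(2 : ℝ) ^ (i + 1) * ω⌉ := by
    rw [Int.lt_ceil, h2]
    push_cast
    linarith [Int.ceil_lt_add_one ((2 : ℝ) ^ i * ω)]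
  unfold dyadicDigit
  omega

lemma exists_dyadicDigit_eq_one {θ : ℝ} (hθ : θ ∈ Ioc 0 1) : ∃ i, dyadicDigit θ i = 1 := by
  by_contra! h
  have hceil : ∀ i, ⌈(2 : ℝ) ^ i * θ⌉ = 1 := by
    intro i
    induction i with
    | zero => simpa [Int.ceil_eq_iff] using hθ
    | succ i ih =>
      have := (dyadicDigit_eq_zero_or_one θ i).resolve_right (h i)
      unfold dyadicDigit at this
      omega
  obtain ⟨i, hi⟩ := pow_unbounded_of_one_lt θ⁻¹ one_lt_two
  have := Int.ceil_le.1 (hceil i).le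
  rw [inv_lt_iff_one_lt_mul₀ hθ.1] at hi
  push_cast at this
  linarith

/-- Inverse branch of the doubling map: it prepends the digit `b` to the dyadic expansion. -/
noncomputable def dyadicCons (b : Bool) (θ : ℝ) : ℝ := (b.toNat + θ) / 2

noncomputable def dyadicPrepend (w : List Bool) (θ : ℝ) : ℝ := w.foldr dyadicCons θ

lemma dyadicCons_mem_Ioc (b : Bool) {θ : ℝ} (hθ : θ ∈ Ioc 0 1) : dyadicCons b θ ∈ Ioc 0 1 := by
  obtain ⟨h0, h1⟩ := hθ
  cases b <;> constructor <;> simp [dyadicCons] <;> linarith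

lemma dyadicDigit_dyadicCons_zero (b : Bool) {θ : ℝ} (hθ : θ ∈ Ioc 0 1) :
    dyadicDigit (dyadicCons b θ) 0 = b.toNat := by
  have h1 : ⌈dyadicCons b θ⌉ = 1 := by
    simpa [Int.ceil_eq_iff] using dyadicCons_mem_Ioc b hθ
  have h2 : ⌈2 * dyadicCons b θ⌉ = b.toNat + 1 := by
    rw [dyadicCons, mul_div_cancel₀ _ two_ne_zero, Int.ceil_natCast_add]
    simp [Int.ceil_eq_iff, hθ.1, hθ.2]
  simp only [dyadicDigit, zero_add, pow_one, pow_zero, one_mul, h1, h2]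
  ring

lemma dyadicDigit_dyadicCons_succ (b : Bool) (θ : ℝ) (i : ℕ) :
    dyadicDigit (dyadicCons b θ) (i + 1) = dyadicDigit θ i := by
  have hceil (j : ℕ) : ⌈(2 : ℝ) ^ (j + 1) * dyadicCons b θ⌉ = 2 ^ j * b.toNat + ⌈2 ^ j * θ⌉ := by
    rw [← Int.ceil_intCast_add]
    congr 1
    rw [dyadicCons, pow_succ]
    push_cast
    ring
  simp only [dyadicDigit, hceil]
  ring

lemma exists_dyadicCons_eq {ω : ℝ} (hω : ω ∈ Ioc 0 1) : ∃ b, ∃ θ ∈ Ioc 0 1, dyadicCons b θ = ω := by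
  obtain ⟨h0, h1⟩ := hω
  rcases le_or_gt ω (1 / 2) with h | h
  · exact ⟨false, 2 * ω, ⟨by linarith, by linarith⟩, by simp [dyadicCons]⟩
  · exact ⟨true, 2 * ω - 1, ⟨by linarith, by linarith⟩, by simp [dyadicCons]⟩

lemma dyadicPrepend_append (w v : List Bool) (θ : ℝ) :
    dyadicPrepend (w ++ v) θ = dyadicPrepend w (dyadicPrepend v θ) :=
  List.foldr_append

lemma dyadicPrepend_mem_Ioc (w : List Bool) {θ : ℝ} (hθ : θ ∈ Ioc 0 1) :
    dyadicPrepend w θ ∈ Ioc 0 1 := by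
  induction w with
  | nil => exact hθ
  | cons b w ih => exact dyadicCons_mem_Ioc b ih

lemma dyadicDigit_dyadicPrepend_add (w : List Bool) (θ : ℝ) (i : ℕ) :
    dyadicDigit (dyadicPrepend w θ) (w.length + i) = dyadicDigit θ i := by
  induction w with
  | nil => simp [dyadicPrepend]
  | cons b w ih =>
    rw [List.length_cons, add_right_comm, ← ih]
    exact dyadicDigit_dyadicCons_succ b _ _

lemma dyadicDigit_dyadicPrepend_of_lt {w : List Bool} {θ : ℝ} (hθ : θ ∈ Ioc 0 1) {i : ℕ}
    (hi : i < w.length) : dyadicDigit (dyadicPrepend w θ) i = (w[i]).toNat := by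
  induction w generalizing i with
  | nil => simp at hi
  | cons b w ih =>
    cases i with
    | zero => exact dyadicDigit_dyadicCons_zero b (dyadicPrepend_mem_Ioc w hθ)
    | succ i =>
      rw [List.getElem_cons_succ, ← ih (by simpa using hi)]
      exact dyadicDigit_dyadicCons_succ b _ _

lemma exists_dyadicPrepend_eq {ω : ℝ} (hω : ω ∈ Ioc 0 1) (n : ℕ) :
    ∃ w : List Bool, w.length = n ∧ ∃ θ ∈ Ioc 0 1, dyadicPrepend w θ = ω := by
  induction n with
  | zero => exact ⟨[], rfl, ω, hω, rfl⟩
  | succ n ih =>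
    obtain ⟨w, rfl, θ, hθ, rfl⟩ := ih
    obtain ⟨b, θ', hθ', rfl⟩ := exists_dyadicCons_eq hθ
    exact ⟨w ++ [b], by simp, θ', hθ', by simp [dyadicPrepend]⟩

lemma dist_dyadicPrepend (w : List Bool) (θ θ' : ℝ) :
    dist (dyadicPrepend w θ) (dyadicPrepend w θ') = dist θ θ' / 2 ^ w.length := by
  induction w with
  | nil => simp [dyadicPrepend]
  | cons b w ih =>
    simp only [dyadicPrepend, List.foldr_cons, dyadicCons, Real.dist_eq] at ih ⊢
    rw [List.length_cons, pow_succ, ← div_div, ← ih, ← sub_div, abs_div, abs_two]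
    ring_nf

lemma isOpenMap_dyadicPrepend (w : List Bool) : IsOpenMap (dyadicPrepend w) := by
  induction w with
  | nil => exact IsOpenMap.id
  | cons b w ih =>
    have hcons : IsOpenMap (dyadicCons b) := by
      change IsOpenMap fun θ : ℝ => ((b.toNat : ℝ) + θ) / 2
      have := (Homeomorph.mulRight₀ (2⁻¹ : ℝ) (by norm_num)).isOpenMap.comp
        (isOpenMap_add_left (b.toNat : ℝ))
      simpa [Function.comp_def, ← div_eq_mul_inv] using this
    exact hcons.comp ih

lemma setOf_dyadicDigit_eq_one_infinite {ω : ℝ} (hω : ω ∈ Ioc 0 1) :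
    {i | dyadicDigit ω i = 1}.Infinite := by
  refine infinite_of_forall_exists_gt fun n => ?_
  obtain ⟨w, hw, θ, hθ, rfl⟩ := exists_dyadicPrepend_eq hω (n + 1)
  obtain ⟨i, hi⟩ := exists_dyadicDigit_eq_one hθ
  exact ⟨w.length + i, by rwa [mem_ofPred_eq, dyadicDigit_dyadicPrepend_add], by omega⟩

end DyadicDigits

section Counting

open scoped Classical

def IsHalfDenseAt (G : Set ℕ) (p : ℕ → Prop) [DecidablePred p] (N q : ℕ) : Prop :=
  N ≤ Nat.count p q ∧ Nat.count p q ≤ 2 * #{i ∈ Finset.range q | p i ∧ i ∈ G}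

lemma card_filter_le_card_filter_count (p : ℕ → Prop) [DecidablePred p] (G : Set ℕ) (q : ℕ) :
    #{i ∈ Finset.range q | p i ∧ i ∈ G} ≤
      #{j ∈ Finset.range (Nat.count p q) | Nat.nth p j ∈ G} := by
  refine Finset.card_le_card_of_injOn (Nat.count p) (fun i hi => ?_) (fun i hi j hj hij => ?_)
  · simp only [Finset.coe_filter, Finset.mem_range, mem_ofPred_eq] at hi ⊢
    exact ⟨Nat.count_strict_mono hi.2.1 hi.1, by rw [Nat.nth_count hi.2.1]; exact hi.2.2⟩
  · simp only [Finset.coe_filter, mem_ofPred_eq] at hi hj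
    exact Nat.count_injective hi.2.1 hj.2.1 hij

lemma notMem_densityZero_of_forall_exists_count {p : ℕ → Prop} [DecidablePred p] {G : Set ℕ}
    (h : ∀ N, ∃ q, IsHalfDenseAt G p N q) :
    {j | Nat.nth p j ∈ G} ∉ densityZero := by
  refine notMem_densityZero_of_frequently (frequently_atTop.2 fun N => ?_)
  obtain ⟨q, hN, hq⟩ := h N
  exact ⟨Nat.count p q, hN, hq.trans (by simpa using card_filter_le_card_filter_count p G q)⟩

lemma exists_le_card_filter_Ico {G : Set ℕ} (hG : G.Infinite) (n m : ℕ) :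
    ∃ q, m ≤ #{i ∈ Finset.Ico n q | i ∈ G} := by
  obtain ⟨s, hsG, rfl⟩ := (hG.sdiff (finite_Iio n)).exists_subset_card_eq m
  obtain ⟨q, hq⟩ := s.exists_nat_subset_range
  refine ⟨q, Finset.card_le_card fun i hi => ?_⟩
  have hiG := hsG hi
  have hiq := Finset.mem_range.1 (hq hi)
  simp only [Set.mem_sdiff, mem_Iio, not_lt] at hiG
  simp [hiG, hiq]

lemma count_le_two_mul_card_filter_of_agree {p : ℕ → Prop} [DecidablePred p] {G : Set ℕ}
    {N n q : ℕ} (hpG : ∀ i ∈ Finset.Ico n q, p i ↔ i ∈ G)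
    (hcard : N + n ≤ #{i ∈ Finset.Ico n q | i ∈ G}) :
    IsHalfDenseAt G p N q := by
  set W := {i ∈ Finset.Ico n q | i ∈ G}
  have hWB : W ⊆ {i ∈ Finset.range q | p i ∧ i ∈ G} := fun i hi => by
    obtain ⟨hi, hiG⟩ := Finset.mem_filter.1 hi
    simpa [(Finset.mem_Ico.1 hi).2, hiG] using (hpG i hi).2 hiG
  have hBA : {i ∈ Finset.range q | p i ∧ i ∈ G} ⊆ {i ∈ Finset.range q | p i} :=
    Finset.monotone_filter_right _ fun _ _ h => h.1
  have hA : {i ∈ Finset.range q | p i} ⊆ Finset.range n ∪ W := fun i hi => by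
    obtain ⟨hiq, hpi⟩ := Finset.mem_filter.1 hi
    by_cases hin : i < n
    · simp [hin]
    · have hi' : i ∈ Finset.Ico n q := Finset.mem_Ico.2 ⟨not_lt.1 hin, Finset.mem_range.1 hiq⟩
      exact Finset.mem_union_right _ (Finset.mem_filter.2 ⟨hi', (hpG i hi').1 hpi⟩)
  have h1 := Finset.card_le_card hWB
  have h2 := Finset.card_le_card hBA
  have h3 := (Finset.card_le_card hA).trans (Finset.card_union_le _ _)
  rw [Finset.card_range] at h3
  rw [IsHalfDenseAt, Nat.count_eq_card_filter_range]
  omega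

end Counting

section Residual

lemma dist_lt_one_of_mem_Ioc {a b : ℝ} (ha : a ∈ Ioc 0 1) (hb : b ∈ Ioc 0 1) : dist a b < 1 := by
  rw [Real.dist_eq, abs_sub_lt_iff]
  constructor <;> linarith [ha.1, ha.2, hb.1, hb.2]

theorem eventually_residual_of_forall_exists_append {C : ℝ → Prop}
    (h : ∀ w : List Bool, ∃ v : List Bool, ∀ θ ∈ Ioc (0 : ℝ) 1, C (dyadicPrepend (w ++ v) θ)) :
    ∀ᶠ ω : Ioc (0 : ℝ) 1 in residual _, C ω := by
  set U : Set ℝ := ⋃ (u : List Bool) (_ : ∀ θ ∈ Ioc (0 : ℝ) 1, C (dyadicPrepend u θ)),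
    dyadicPrepend u '' Ioo 0 1
  have hU : IsOpen U :=
    isOpen_iUnion fun u => isOpen_iUnion fun _ => isOpenMap_dyadicPrepend u _ isOpen_Ioo
  have hdense : Dense ((↑) ⁻¹' U : Set (Ioc (0 : ℝ) 1)) := by
    refine Metric.dense_iff.2 fun ω₀ r hr => ?_
    obtain ⟨n, hn⟩ := exists_pow_lt_of_lt_one hr one_half_lt_one
    obtain ⟨w, rfl, θ₀, hθ₀, hω₀⟩ := exists_dyadicPrepend_eq ω₀.2 n
    obtain ⟨v, hv⟩ := h w
    have hhalf : (1 / 2 : ℝ) ∈ Ioc 0 1 := by norm_num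
    refine ⟨⟨_, dyadicPrepend_mem_Ioc (w ++ v) hhalf⟩, ?_,
      mem_iUnion₂.2 ⟨w ++ v, hv, 1 / 2, by norm_num, rfl⟩⟩
    change dist (dyadicPrepend (w ++ v) (1 / 2)) ω₀ < r
    rw [← hω₀, dyadicPrepend_append, dist_dyadicPrepend]
    calc dist (dyadicPrepend v (1 / 2)) θ₀ / 2 ^ w.length < 1 / 2 ^ w.length := by
          gcongr
          exact dist_lt_one_of_mem_Ioc (dyadicPrepend_mem_Ioc v hhalf) hθ₀
      _ < r := by rwa [← one_div_pow]
  filter_upwards [residual_of_dense_open (hU.preimage continuous_subtype_val) hdense] with ω hω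
  obtain ⟨u, hu, θ, hθ, hωθ⟩ := mem_iUnion₂.1 hω
  exact hωθ ▸ hu θ (Ioo_subset_Ioc_self hθ)

open scoped Classical in
theorem eventually_residual_nth_notMem_densityZero {G : Set ℕ} (hG : G.Infinite) :
    ∀ᶠ ω : Ioc (0 : ℝ) 1 in residual _,
      {j | Nat.nth (fun i => dyadicDigit ω i = 1) j ∈ G} ∉ densityZero := by
  have hforce (N : ℕ) : ∀ᶠ ω : Ioc (0 : ℝ) 1 in residual _,
      ∃ q, IsHalfDenseAt G (fun i => dyadicDigit ω i = 1) N q := by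
    refine eventually_residual_of_forall_exists_append
      (C := fun ω => ∃ q, IsHalfDenseAt G (fun i => dyadicDigit ω i = 1) N q) fun w => ?_
    obtain ⟨q, hq⟩ := exists_le_card_filter_Ico hG w.length (N + w.length)
    set v := List.ofFn fun k : Fin (q - w.length) => decide (w.length + k ∈ G)
    refine ⟨v, fun θ hθ => ⟨q, count_le_two_mul_card_filter_of_agree (fun i hi => ?_) hq⟩⟩
    obtain ⟨⟨k, rfl⟩, hkq⟩ := And.imp_left Nat.exists_eq_add_of_le (Finset.mem_Ico.1 hi)
    have hk : k < v.length := by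
      simp only [v, List.length_ofFn]
      omega
    rw [dyadicPrepend_append, dyadicDigit_dyadicPrepend_add,
      dyadicDigit_dyadicPrepend_of_lt hθ hk, List.getElem_ofFn]
    simp
  filter_upwards [eventually_countable_forall.2 hforce] with ω hω
  exact notMem_densityZero_of_forall_exists_count hω

end Residual

section ClusterPointsOfSubsequences

variable {X : Type*} [TopologicalSpace X]

lemma IdealClusterPt.mem_limitPts [FirstCountableTopology X] {x : ℕ → X} {l : X}
    (h : IdealClusterPt densityZero x l) : l ∈ limitPts x :=
  mem_limitPts_iff_mapClusterPt.2 (h.mapClusterPt fun _ => Set.Finite.mem_densityZero)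

theorem eventually_residual_idealClusterPt_subseq_eq [SecondCountableTopology X] (x : ℕ → X) :
    ∀ᶠ ω : Ioc (0 : ℝ) 1 in residual _,
      {l | IdealClusterPt densityZero (subseq x ω) l} = limitPts x := by
  obtain ⟨B, hBc, -, hB⟩ := TopologicalSpace.exists_countable_basis X
  have hV : ∀ V ∈ B, ∀ᶠ ω : Ioc (0 : ℝ) 1 in residual _,
      {i | x i ∈ V}.Infinite → {j | subseq x ω j ∈ V} ∉ densityZero := by
    intro V _
    by_cases hinf : {i | x i ∈ V}.Infinite
    · exact (eventually_residual_nth_notMem_densityZero hinf).mono fun ω hω _ => hω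
    · exact Eventually.of_forall fun ω h => absurd h hinf
  filter_upwards [(eventually_countable_ball hBc).2 hV] with ω hω
  refine Subset.antisymm (fun l hl => ?_) (fun l hl U hU => ?_)
  · exact limitPts_comp_subset (Nat.nth_strictMono (setOf_dyadicDigit_eq_one_infinite ω.2))
      (IdealClusterPt.mem_limitPts hl)
  · obtain ⟨V, hVB, hlV, hVU⟩ := hB.mem_nhds_iff.1 hU
    have hinf : {i | x i ∈ V}.Infinite := Nat.frequently_atTop_iff_infinite.1 <|
      mapClusterPt_iff_frequently.1 (mem_limitPts_iff_mapClusterPt.1 hl) V (hB.mem_nhds hVB hlV)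
    exact fun h => hω V hVB hinf (mem_densityZero_of_subset (fun j hj => hVU hj) h)

end ClusterPointsOfSubsequences

lemma isMeagre_setOf_not_iff_and_not_isMeagre_iff {X : Type*} [TopologicalSpace X] [BaireSpace X]
    [Nonempty X] {Q : X → Prop} {p : Prop} (h : ∀ᶠ x in residual X, Q x ↔ p) :
    (IsMeagre {x | ¬Q x} ↔ ¬IsMeagre {x | Q x}) ∧ (¬IsMeagre {x | Q x} ↔ p) := by
  by_cases hp : p
  · have hres : {x | Q x} ∈ residual X := h.mono fun x hx => hx.2 hp
    have hnm := not_isMeagre_of_mem_residual hres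
    exact ⟨iff_of_true (by simpa [IsMeagre, compl_ofPred] using hres) hnm, iff_of_true hnm hp⟩
  · have hres : {x | ¬Q x} ∈ residual X := h.mono fun x hx => mt hx.1 hp
    have hm : IsMeagre {x | Q x} := by simpa [IsMeagre, compl_ofPred] using hres
    exact ⟨iff_of_false (not_isMeagre_of_mem_residual hres) (not_not.2 hm),
      iff_of_false (not_not.2 hm) hp⟩

instance : LocallyCompactSpace (Ioc (0 : ℝ) 1) := isLocallyClosed_Ioc.locallyCompactSpace

/-- For a real sequence `x`, the set of `ω` preserving the statistical cluster
points is comeager iff it is nonmeager, iff every ordinary limit point of `x`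
is a statistical cluster point of `x`. -/
theorem statistical_cluster_main (x : ℕ → ℝ) :
    (IsMeagre {ω : Set.Ioc (0:ℝ) 1 |
        {l : ℝ | IdealClusterPt densityZero (subseq x ↑ω) l} ≠
          {l : ℝ | IdealClusterPt densityZero x l}} ↔
      ¬ IsMeagre {ω : Set.Ioc (0:ℝ) 1 |
        {l : ℝ | IdealClusterPt densityZero (subseq x ↑ω) l} =
          {l : ℝ | IdealClusterPt densityZero x l}}) ∧
    (¬ IsMeagre {ω : Set.Ioc (0:ℝ) 1 |
        {l : ℝ | IdealClusterPt densityZero (subseq x ↑ω) l} =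
          {l : ℝ | IdealClusterPt densityZero x l}} ↔
      limitPts x ⊆ {l : ℝ | IdealClusterPt densityZero x l}) := by
  have : Nonempty (Ioc (0 : ℝ) 1) := nonempty_Ioc_subtype one_pos
  refine isMeagre_setOf_not_iff_and_not_isMeagre_iff
    ((eventually_residual_idealClusterPt_subseq_eq x).mono fun ω hω => ?_)
  rw [hω]
  exact ⟨fun h => h.le, fun h => h.antisymm fun _ hl => hl.mem_limitPts⟩
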